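/- arXiv:2109.01886 — 2 statements merged into one kernel-verified Lean document; each statement's English description precedes it below -/
import Mathlib

section
/- For every real number s with 0 ≤ s < 1 and every real angle φ, the series ∑_{m=1}^∞ s^m cos(mφ)/m converges, and its sum equals −(1/2)·log(1 − 2s·cos(φ) + s²). (In particular 1 − 2s·cos(φ) + s² > 0 for such s.) -/
/-- For every real `s` with `0 ≤ s < 1` and every real angle `φ`, we have
`1 - 2s·cos φ + s² > 0` and the series `∑_{m=1}^∞ s^m cos(mφ)/m` converges with sum
`-(1/2)·log(1 - 2s·cos φ + s²)`. -/
theorem stmt0 (s φ : ℝ) (hs0 : 0 ≤ s) (hs1 : s < 1) :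
    0 < 1 - 2 * s * Real.cos φ + s ^ 2 ∧
    HasSum (fun m : ℕ => s ^ (m + 1) * Real.cos ((m + 1 : ℝ) * φ) / (m + 1 : ℝ))
      (-(1 / 2) * Real.log (1 - 2 * s * Real.cos φ + s ^ 2)) := by
  set z : ℂ := (s : ℂ) * Complex.exp (φ * Complex.I) with hz
  have hznorm : ‖z‖ < 1 := by
    rw [hz, norm_mul, Complex.norm_exp_ofReal_mul_I, mul_one, Complex.norm_real,
      Real.norm_of_nonneg hs0]
    exact hs1
  have hnsq : Complex.normSq (1 - z) = 1 - 2 * s * Real.cos φ + s ^ 2 := by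
    rw [hz]
    simp [Complex.normSq_apply, Complex.exp_ofReal_mul_I_re, Complex.exp_ofReal_mul_I_im]
    nlinarith [Real.sin_sq_add_cos_sq φ]
  have hz1 : 1 - z ≠ 0 := by
    intro h
    have : ‖z‖ = 1 := by
      have : z = 1 := by linear_combination -h
      simp [this]
    linarith
  have hpos : 0 < 1 - 2 * s * Real.cos φ + s ^ 2 := by
    rw [← hnsq]; exact Complex.normSq_pos.mpr hz1
  refine ⟨hpos, ?_⟩
  have H := Complex.hasSum_re (Complex.hasSum_taylorSeries_neg_log hznorm)
  have hre : ∀ n : ℕ, (z ^ n / n).re = s ^ n * Real.cos (n * φ) / n := by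
    intro n
    have key : z ^ n / n = ((s ^ n / n : ℝ) : ℂ) * Complex.exp (((n * φ : ℝ) : ℂ) * Complex.I) := by
      rw [hz, mul_pow, ← Complex.exp_nat_mul]
      push_cast
      ring
    rw [key, Complex.re_ofReal_mul, Complex.exp_ofReal_mul_I_re]
    ring
  have Hre : HasSum (fun n : ℕ => s ^ n * Real.cos (n * φ) / n)
      (-Complex.log (1 - z)).re := H.congr_fun fun n => (hre n).symm
  have hlog : (-Complex.log (1 - z)).re
      = -(1 / 2) * Real.log (1 - 2 * s * Real.cos φ + s ^ 2) := by
    rw [Complex.neg_re, Complex.log_re, Complex.norm_def, ← hnsq,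
      Real.log_sqrt (Complex.normSq_nonneg _)]
    ring
  rw [← hlog]
  have h2 := (hasSum_nat_add_iff' (f := fun n : ℕ => s ^ n * Real.cos (n * φ) / n) 1).mpr Hre
  simp only [Finset.range_one, Finset.sum_singleton, Nat.cast_zero, div_zero, sub_zero] at h2
  exact h2.congr_fun fun n => by push_cast; ring
end

section
/- Let ε > 0, α ∈ ℝ, and let y = (1/ε)(cos α, sin α) ∈ ℝ² be a source point. Let x ∈ ℝ² have polar coordinates (r, θ), i.e. x = r(cos θ, sin θ) with r ≥ 0, and assume εr < 1. Then the fundamental solution Φ(x − y) = −(1/(2π))·log‖x − y‖ of the operator −Δ in the plane satisfies the convergent expansion Φ(x − y) = (1/(2π))·( log ε + ∑_{m=1}^∞ (εr)^m · cos(m(θ − α))/m ). -/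
/-!
With `t = εr` and `φ = θ - α`, the law of cosines gives `ε‖x - y‖ = ‖1 - t e^{iφ}‖`. Hence
`-log‖x - y‖ = log ε - Re log (1 - t e^{iφ})`, and the series is the real part of the Taylor
series `-log (1 - z) = ∑ z^m / m` at `z = t e^{iφ}`, which converges since `|t| < 1`.
-/

open Real

lemma Complex.normSq_one_sub_ofReal_mul_exp (t φ : ℝ) :
    Complex.normSq (1 - t * Complex.exp (φ * Complex.I)) = 1 - 2 * t * Real.cos φ + t ^ 2 := by
  rw [Complex.normSq_apply]
  simp only [Complex.sub_re, Complex.sub_im, Complex.one_re, Complex.one_im, Complex.re_ofReal_mul,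
    Complex.im_ofReal_mul, Complex.exp_ofReal_mul_I_re, Complex.exp_ofReal_mul_I_im]
  linear_combination t ^ 2 * Real.sin_sq_add_cos_sq φ

lemma one_sub_two_mul_cos_add_sq_pos {t : ℝ} (ht : |t| < 1) (φ : ℝ) :
    0 < 1 - 2 * t * cos φ + t ^ 2 := by
  have : t * cos φ ≤ |t| := by
    calc t * cos φ ≤ |t * cos φ| := le_abs_self _
      _ ≤ |t| := by rw [abs_mul]; exact mul_le_of_le_one_right (abs_nonneg t) (abs_cos_le_one φ)
  nlinarith [sq_abs t, abs_nonneg t]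

theorem hasSum_pow_succ_mul_cos_div {t : ℝ} (ht : |t| < 1) (φ : ℝ) :
    HasSum (fun m : ℕ => t ^ (m + 1) * cos ((m + 1 : ℝ) * φ) / (m + 1 : ℝ))
      (-(1 / 2) * log (1 - 2 * t * cos φ + t ^ 2)) := by
  set z : ℂ := t * Complex.exp (φ * Complex.I)
  have hz : ‖z‖ < 1 := by
    rwa [norm_mul, Complex.norm_exp_ofReal_mul_I, mul_one, Complex.norm_real, Real.norm_eq_abs]
  have hre (m : ℕ) :
      (z ^ (m + 1) / (m + 1)).re = t ^ (m + 1) * cos ((m + 1 : ℝ) * φ) / (m + 1 : ℝ) := by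
    have : z ^ (m + 1) / (m + 1) =
        ((t ^ (m + 1) / (m + 1) : ℝ) : ℂ) * Complex.exp (((m + 1 : ℝ) * φ : ℝ) * Complex.I) := by
      rw [mul_pow, ← Complex.exp_nat_mul]
      push_cast
      ring_nf
    rw [this, Complex.re_ofReal_mul, Complex.exp_ofReal_mul_I_re]
    ring
  have hlog : (-Complex.log (1 - z)).re = -(1 / 2) * log (1 - 2 * t * cos φ + t ^ 2) := by
    rw [Complex.neg_re, Complex.log_re, ← Complex.normSq_one_sub_ofReal_mul_exp,
      Complex.normSq_eq_norm_sq, Real.log_pow]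
    push_cast
    ring
  simpa only [hre, hlog] using Complex.hasSum_re (Complex.hasSum_taylorSeries_neg_log' hz)

theorem EuclideanSpace.norm_sub_sq_of_polar {x y : EuclideanSpace ℝ (Fin 2)} {r θ s α : ℝ}
    (hx0 : x 0 = r * cos θ) (hx1 : x 1 = r * sin θ)
    (hy0 : y 0 = s * cos α) (hy1 : y 1 = s * sin α) :
    ‖x - y‖ ^ 2 = r ^ 2 - 2 * r * s * cos (θ - α) + s ^ 2 := by
  rw [EuclideanSpace.real_norm_sq_eq, Fin.sum_univ_two, PiLp.sub_apply, PiLp.sub_apply,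
    hx0, hx1, hy0, hy1, cos_sub]
  linear_combination r ^ 2 * sin_sq_add_cos_sq θ + s ^ 2 * sin_sq_add_cos_sq α

/-- Expansion of the fundamental solution `Φ(x - y) = -(1/(2π))·log‖x - y‖` of `-Δ` in the
plane in terms of the harmonic polynomials: if the source point is
`y = (1/ε)(cos α, sin α)` with `ε > 0`, and `x = r(cos θ, sin θ)` with `r ≥ 0` and `εr < 1`,
then `Φ(x - y) = (1/(2π))·(log ε + ∑_{m=1}^∞ (εr)^m cos(m(θ - α))/m)`, the series being
convergent. -/
theorem stmt1 (ε α r θ : ℝ) (hε : 0 < ε) (hr : 0 ≤ r) (hεr : ε * r < 1)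
    (x y : EuclideanSpace ℝ (Fin 2))
    (hy0 : y 0 = (1 / ε) * Real.cos α) (hy1 : y 1 = (1 / ε) * Real.sin α)
    (hx0 : x 0 = r * Real.cos θ) (hx1 : x 1 = r * Real.sin θ) :
    ∃ S : ℝ,
      HasSum (fun m : ℕ => (ε * r) ^ (m + 1) * Real.cos ((m + 1 : ℝ) * (θ - α)) / (m + 1 : ℝ))
        S ∧
      -(1 / (2 * Real.pi)) * Real.log ‖x - y‖ = (1 / (2 * Real.pi)) * (Real.log ε + S) := by
  have ht : |ε * r| < 1 := by rwa [abs_of_nonneg (mul_nonneg hε.le hr)]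
  refine ⟨_, hasSum_pow_succ_mul_cos_div ht (θ - α), ?_⟩
  set Q := 1 - 2 * (ε * r) * cos (θ - α) + (ε * r) ^ 2
  have hnorm : ‖x - y‖ ^ 2 = Q / ε ^ 2 := by
    rw [EuclideanSpace.norm_sub_sq_of_polar hx0 hx1 hy0 hy1]
    field_simp
    ring
  have hlog : 2 * log ‖x - y‖ = log Q - 2 * log ε := by
    have h := Real.log_pow ‖x - y‖ 2
    rw [hnorm, Real.log_div (one_sub_two_mul_cos_add_sq_pos ht _).ne' (pow_ne_zero 2 hε.ne'),
      Real.log_pow] at h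
    push_cast at h
    linarith
  linear_combination (-(1 / (2 * π)) / 2) * hlog
end
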